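/- Let Λ be a finite simple graph and let Γ = {v} ∗ Λ be the cone over Λ, i.e., the graph obtained from Λ by adding a new vertex v adjacent to every vertex of Λ. Then BB(Γ) is isomorphic to A(Λ). -/

import Mathlib

def raagRels {V : Type} (G : SimpleGraph V) : Set (FreeGroup V) :=
  {r | ∃ v w : V, G.Adj v w ∧
    r = FreeGroup.of v * FreeGroup.of w * (FreeGroup.of v)⁻¹ * (FreeGroup.of w)⁻¹}

/-- The right-angled Artin group of a simple graph. -/
abbrev RAAG {V : Type} (G : SimpleGraph V) : Type := PresentedGroup (raagRels G)

/-- The canonical generator of `RAAG G` corresponding to a vertex. -/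
def raagGen {V : Type} (G : SimpleGraph V) (v : V) : RAAG G :=
  PresentedGroup.of (rels := raagRels G) v

/-- The homomorphism `A(Γ) → ℤ` sending every vertex generator to `1`. -/
def bbgChar {V : Type} (G : SimpleGraph V) : RAAG G →* Multiplicative ℤ :=
  PresentedGroup.toGroup (f := fun _ : V => Multiplicative.ofAdd (1 : ℤ)) (by
    rintro r ⟨v, w, -, rfl⟩
    simp only [map_mul, map_inv, FreeGroup.lift_apply_of]
    group)

/-- The Bestvina–Brady group of a simple graph, as a subgroup of the RAAG. -/
def BBG {V : Type} (G : SimpleGraph V) : Subgroup (RAAG G) := (bbgChar G).ker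

/-- The cone over a graph `G`: a new vertex (`none`) is added and joined to every vertex of
`G`. -/
def coneGraph {V : Type} (G : SimpleGraph V) : SimpleGraph (Option V) :=
  SimpleGraph.fromRel (fun x y =>
    x = none ∨ ∃ v w : V, x = some v ∧ y = some w ∧ G.Adj v w)

/-!
The apex `v` of the cone is adjacent to every vertex, so it is central in `A(Γ)`. Hence
`φ : u ↦ u v⁻¹` defines a homomorphism `A(Λ) → BB(Γ)`, and killing `v` defines a retraction
`ψ : A(Γ) → A(Λ)` of it. Every `g ∈ A(Γ)` factors as `g = φ(ψ g) · v ^ χ(g)`, since both sides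
are homomorphisms in `g` (`v` being central) that agree on generators; on `BB(Γ) = ker χ` this
says that `φ ∘ ψ` is the identity.
-/

variable {V : Type} {G : SimpleGraph V}

namespace RAAG

theorem raagGen_commute {v w : V} (h : G.Adj v w) : Commute (raagGen G v) (raagGen G w) := by
  rw [← commutatorElement_eq_one_iff_commute, commutatorElement_def]
  exact PresentedGroup.one_of_mem ⟨v, w, h, rfl⟩

theorem hom_ext {H : Type*} [Group H] {f g : RAAG G →* H}
    (h : ∀ v, f (raagGen G v) = g (raagGen G v)) : f = g :=
  PresentedGroup.ext h

def lift {H : Type*} [Group H] (f : V → H) (hf : ∀ v w, G.Adj v w → Commute (f v) (f w)) :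
    RAAG G →* H :=
  PresentedGroup.toGroup (f := f) (by
    rintro r ⟨v, w, h, rfl⟩
    simp only [map_mul, map_inv, FreeGroup.lift_apply_of]
    rw [← commutatorElement_def, commutatorElement_eq_one_iff_commute]
    exact hf v w h)

@[simp]
theorem lift_raagGen {H : Type*} [Group H] (f : V → H)
    (hf : ∀ v w, G.Adj v w → Commute (f v) (f w)) (v : V) :
    lift f hf (raagGen G v) = f v :=
  PresentedGroup.toGroup.of _

theorem raagGen_commute_of_forall_adj {v : V} (hv : ∀ w, w ≠ v → G.Adj v w) (g : RAAG G) :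
    Commute (raagGen G v) g := by
  have hle : Subgroup.closure (Set.range (PresentedGroup.of (rels := raagRels G))) ≤
      Subgroup.centralizer {raagGen G v} := by
    rw [Subgroup.closure_le]
    rintro _ ⟨w, rfl⟩
    rw [SetLike.mem_coe, Subgroup.mem_centralizer_singleton_iff]
    by_cases hw : w = v
    · subst hw; rfl
    · exact (raagGen_commute (hv w hw)).symm
  rw [PresentedGroup.closure_range_of] at hle
  exact (Subgroup.mem_centralizer_singleton_iff.mp (hle (Subgroup.mem_top g))).symm

end RAAG

@[simp]
theorem bbgChar_raagGen (v : V) : bbgChar G (raagGen G v) = Multiplicative.ofAdd 1 :=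
  PresentedGroup.toGroup.of _

namespace coneGraph

variable (Λ : SimpleGraph V)

theorem adj_none_some (u : V) : (coneGraph Λ).Adj none (some u) := by
  simp [coneGraph]

@[simp]
theorem adj_some_some {u w : V} : (coneGraph Λ).Adj (some u) (some w) ↔ Λ.Adj u w := by
  simp only [coneGraph, SimpleGraph.fromRel_adj, ne_eq, Option.some.injEq, reduceCtorEq,
    false_or]
  constructor
  · rintro ⟨-, ⟨u', w', rfl, rfl, h⟩ | ⟨u', w', rfl, rfl, h⟩⟩
    exacts [h, h.symm]
  · intro h
    exact ⟨h.ne, Or.inl ⟨u, w, rfl, rfl, h⟩⟩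

abbrev apex : RAAG (coneGraph Λ) := raagGen (coneGraph Λ) none

theorem apex_commute (g : RAAG (coneGraph Λ)) : Commute (apex Λ) g :=
  RAAG.raagGen_commute_of_forall_adj
    (fun x hx => by obtain ⟨u, rfl⟩ := Option.ne_none_iff_exists'.mp hx; exact adj_none_some Λ u) g

def retraction : RAAG (coneGraph Λ) →* RAAG Λ :=
  RAAG.lift (fun x => x.elim 1 (raagGen Λ)) (by
    rintro (_ | u) (_ | w) h
    · exact Commute.one_left _
    · exact Commute.one_left _
    · exact Commute.one_right _
    · exact RAAG.raagGen_commute ((adj_some_some Λ).mp h))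

def sectionHom : RAAG Λ →* RAAG (coneGraph Λ) :=
  RAAG.lift (fun u => raagGen (coneGraph Λ) (some u) * (apex Λ)⁻¹) (fun _ _ h =>
    ((RAAG.raagGen_commute ((adj_some_some Λ).mpr h)).mul_right
      (apex_commute Λ _).inv_left.symm).mul_left (apex_commute Λ _).inv_left)

theorem retraction_sectionHom (a : RAAG Λ) : retraction Λ (sectionHom Λ a) = a := by
  suffices (retraction Λ).comp (sectionHom Λ) = MonoidHom.id _ from DFunLike.congr_fun this a
  refine RAAG.hom_ext fun u => ?_
  simp [retraction, sectionHom]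

theorem sectionHom_mem_BBG (a : RAAG Λ) : sectionHom Λ a ∈ BBG (coneGraph Λ) := by
  suffices (bbgChar (coneGraph Λ)).comp (sectionHom Λ) = 1 from DFunLike.congr_fun this a
  refine RAAG.hom_ext fun u => ?_
  simp [sectionHom]

theorem sectionHom_retraction_mul_apex_zpow (g : RAAG (coneGraph Λ)) :
    sectionHom Λ (retraction Λ g) * apex Λ ^ (bbgChar (coneGraph Λ) g).toAdd = g := by
  let f : RAAG (coneGraph Λ) →* RAAG (coneGraph Λ) :=
    { toFun := fun g => sectionHom Λ (retraction Λ g) * apex Λ ^ (bbgChar (coneGraph Λ) g).toAdd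
      map_one' := by simp
      map_mul' := fun g h => by
        simp only [map_mul, toAdd_mul, zpow_add]
        exact ((apex_commute Λ _).zpow_left _).symm.mul_mul_mul_comm _ _ }
  suffices f = MonoidHom.id _ from DFunLike.congr_fun this g
  refine RAAG.hom_ext fun x => ?_
  cases x <;> simp [f, retraction, sectionHom]

end coneGraph

def bbgConeEquiv (Λ : SimpleGraph V) : BBG (coneGraph Λ) ≃* RAAG Λ where
  toFun g := coneGraph.retraction Λ g
  invFun a := ⟨coneGraph.sectionHom Λ a, coneGraph.sectionHom_mem_BBG Λ a⟩
  left_inv g := Subtype.ext <| by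
    simpa [(MonoidHom.mem_ker).mp g.2] using coneGraph.sectionHom_retraction_mul_apex_zpow Λ g
  right_inv := coneGraph.retraction_sectionHom Λ
  map_mul' g h := map_mul _ g.1 h.1

theorem stmt_3_general {V : Type} (Λ : SimpleGraph V) :
    Nonempty (↥(BBG (coneGraph Λ)) ≃* RAAG Λ) :=
  ⟨bbgConeEquiv Λ⟩

/-- The Bestvina–Brady group of the cone over `Λ` is isomorphic to the RAAG on `Λ`. -/
theorem stmt_3 {V : Type} [Fintype V] (Λ : SimpleGraph V) :
    Nonempty (↥(BBG (coneGraph Λ)) ≃* RAAG Λ) :=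
  stmt_3_general Λ
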